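/- There is an absolute constant C such that for all real Y ≥ 1, ∑_{k > Y} 1/φ(k)² ≤ C/Y, where the sum is over integers k > Y. -/

import Mathlib

open scoped ENNReal Nat

/-!
Since `φ (k / d) * φ d ≤ φ k`, summing `φ (k / d)` over `d ∣ k` gives `k / φ k ≤ ∑_{d ∣ k} 1 / φ d`,
so for nonnegative `f` we get `∑ f k / φ k ≤ ∑_d (1 / φ d) ∑_m f (d m) / (d m)`.
For `f k = 1 / k` the inner sum is `d⁻² ∑_{m > Y / d} m⁻²`, at most `2 / d²` and `2 / (d Y)`; hence
`∑_{k > Y} 1 / (k φ k)` is at most `4` for `Y = 0` and at most `2 / Y * ∑ 1 / (k φ k)` in general.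
For `f = 1 / φ`, `φ (d m) ≥ φ d φ m` bounds the inner sum by `1 / (d φ d)` times
`∑_{m > Y / d} 1 / (m φ m)`, which gives `∑_{k > Y} 1 / φ k ^ 2 ≤ 2 / Y * ∑ 1 / (k φ k) * ∑ 1 / φ k ^ 2`
and, at `Y = 0`, `∑ 1 / φ k ^ 2 ≤ (∑ 1 / (k φ k))²`.
Working in `ℝ≥0∞` makes every rearrangement unconditional.
-/

theorem Nat.natCast_le_totient_mul_sum_inv_totient (k : ℕ) :
    (k : ℝ≥0∞) ≤ φ k * ∑ d ∈ k.divisors, (φ d : ℝ≥0∞)⁻¹ := by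
  have hk : ∑ d ∈ k.divisors, φ (k / d) = k := by
    rw [Nat.sum_div_divisors k φ, Nat.sum_totient]
  calc (k : ℝ≥0∞) = ∑ d ∈ k.divisors, (φ (k / d) : ℝ≥0∞) := by exact_mod_cast hk.symm
    _ ≤ ∑ d ∈ k.divisors, φ k * (φ d : ℝ≥0∞)⁻¹ := by
      gcongr with d hd
      have hφd : (φ d : ℝ≥0∞) ≠ 0 := by simpa using (Nat.pos_of_mem_divisors hd).ne'
      rw [← div_eq_mul_inv, ENNReal.le_div_iff_mul_le (.inl hφd) (.inl (ENNReal.natCast_ne_top _))]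
      have := Nat.totient_super_multiplicative (k / d) d
      rw [Nat.div_mul_cancel (Nat.dvd_of_mem_divisors hd)] at this
      exact_mod_cast this
    _ = _ := by rw [Finset.mul_sum]

theorem Nat.inv_totient_le_one {n : ℕ} (hn : n ≠ 0) : (φ n : ℝ≥0∞)⁻¹ ≤ 1 :=
  ENNReal.inv_le_one.2 (by exact_mod_cast Nat.totient_pos.2 (Nat.pos_of_ne_zero hn))

theorem Nat.inv_totient_mul_le (a b : ℕ) :
    (φ (a * b) : ℝ≥0∞)⁻¹ ≤ (φ a : ℝ≥0∞)⁻¹ * (φ b : ℝ≥0∞)⁻¹ := by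
  rw [← ENNReal.mul_inv (.inr (ENNReal.natCast_ne_top _)) (.inl (ENNReal.natCast_ne_top _))]
  exact ENNReal.inv_le_inv.2 (by exact_mod_cast Nat.totient_super_multiplicative a b)

theorem Nat.div_totient_le_tsum_ite_dvd (k : ℕ) (a : ℝ≥0∞) (ha : k = 0 → a = 0) :
    a / φ k ≤ ∑' d : ℕ, if d ∣ k then (φ d : ℝ≥0∞)⁻¹ * (a / k) else 0 := by
  rcases eq_or_ne k 0 with rfl | hk
  · simp [ha rfl]
  have hdiv : ∑' d : ℕ, (if d ∣ k then (φ d : ℝ≥0∞)⁻¹ * (a / k) else 0)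
      = (∑ d ∈ k.divisors, (φ d : ℝ≥0∞)⁻¹) * (a / k) := by
    rw [tsum_eq_sum (s := k.divisors), Finset.sum_mul]
    · exact Finset.sum_congr rfl fun d hd => if_pos (Nat.dvd_of_mem_divisors hd)
    · intro d hd
      exact if_neg fun hdk => hd (Nat.mem_divisors.2 ⟨hdk, hk⟩)
  have hk' : (k : ℝ≥0∞) ≠ 0 := by exact_mod_cast hk
  calc a / φ k = k / φ k * (a / k) := by
        rw [mul_comm, ← mul_div_assoc, ENNReal.div_mul_cancel hk' (ENNReal.natCast_ne_top k)]
    _ ≤ _ := by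
        rw [hdiv]
        gcongr
        exact ENNReal.div_le_of_le_mul' (Nat.natCast_le_totient_mul_sum_inv_totient k)

theorem tsum_ite_dvd_eq_tsum_mul {M : Type*} [AddCommMonoid M] [TopologicalSpace M]
    (d : ℕ) (g : ℕ → M) (hg : g 0 = 0) :
    ∑' k : ℕ, (if d ∣ k then g k else 0) = ∑' m : ℕ, g (d * m) := by
  rcases eq_or_ne d 0 with rfl | hd
  · simp [hg]
  · rw [← (mul_right_injective₀ hd).tsum_eq]
    · refine tsum_congr fun m => ?_
      simp
    · intro k hk
      by_contra h
      exact hk (if_neg fun ⟨m, hm⟩ => h ⟨m, hm.symm⟩)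

theorem tsum_div_totient_le (f : ℕ → ℝ≥0∞) (hf : f 0 = 0) :
    ∑' k : ℕ, f k / φ k ≤ ∑' d : ℕ, (φ d : ℝ≥0∞)⁻¹ * ∑' m : ℕ, f (d * m) / (d * m : ℕ) :=
  calc ∑' k : ℕ, f k / φ k
      ≤ ∑' (k : ℕ) (d : ℕ), if d ∣ k then (φ d : ℝ≥0∞)⁻¹ * (f k / k) else 0 :=
        ENNReal.tsum_le_tsum fun k =>
          Nat.div_totient_le_tsum_ite_dvd k (f k) (by rintro rfl; exact hf)
    _ = ∑' (d : ℕ) (k : ℕ), if d ∣ k then (φ d : ℝ≥0∞)⁻¹ * (f k / k) else 0 := ENNReal.tsum_comm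
    _ = _ := tsum_congr fun d => by
        rw [tsum_ite_dvd_eq_tsum_mul d _ (by simp [hf]), ENNReal.tsum_mul_left]

theorem tsum_inv_sq_tail_nat_le (N : ℕ) :
    ∑' m : ℕ, (if N < m then ((m : ℝ≥0∞) ^ 2)⁻¹ else 0) ≤ 2 / (N + 1) := by
  refine ENNReal.tsum_le_of_sum_range_le fun n => ?_
  rw [← Finset.sum_filter]
  have hfilter : (Finset.range n).filter (N < ·) = Finset.Ioo N n := by
    ext i; simp [and_comm]
  have hterm : ∀ i ∈ Finset.Ioo N n, ((i : ℝ≥0∞) ^ 2)⁻¹ = ENNReal.ofReal ((i : ℝ) ^ 2)⁻¹ := by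
    intro i hi
    have hi : (0 : ℝ) < i := by exact_mod_cast (Finset.mem_Ioo.1 hi).1.trans_le' (Nat.zero_le N)
    rw [ENNReal.ofReal_inv_of_pos (by positivity), ENNReal.ofReal_pow hi.le, ENNReal.ofReal_natCast]
  have hrhs : (2 / (N + 1) : ℝ≥0∞) = ENNReal.ofReal (2 / (N + 1)) := by
    rw [ENNReal.ofReal_div_of_pos (by positivity)]
    norm_cast
  rw [hfilter, Finset.sum_congr rfl hterm,
    ← ENNReal.ofReal_sum_of_nonneg (fun i _ => by positivity), hrhs]
  exact ENNReal.ofReal_le_ofReal (sum_Ioo_inv_sq_le N n)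

theorem tsum_inv_sq_le : ∑' m : ℕ, (if 0 < m then ((m : ℝ≥0∞) ^ 2)⁻¹ else 0) ≤ 2 := by
  simpa using tsum_inv_sq_tail_nat_le 0

theorem tsum_inv_sq_tail_le (Y : ℝ≥0∞) :
    ∑' m : ℕ, (if Y < m then ((m : ℝ≥0∞) ^ 2)⁻¹ else 0) ≤ 2 / Y := by
  induction Y with
  | top => simp
  | coe y =>
    calc ∑' m : ℕ, (if (y : ℝ≥0∞) < m then ((m : ℝ≥0∞) ^ 2)⁻¹ else 0)
        = ∑' m : ℕ, (if ⌊y⌋₊ < m then ((m : ℝ≥0∞) ^ 2)⁻¹ else 0) := by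
          refine tsum_congr fun m => ?_
          simp only [Nat.floor_lt (zero_le : 0 ≤ y)]
          norm_cast
      _ ≤ 2 / (⌊y⌋₊ + 1) := tsum_inv_sq_tail_nat_le _
      _ ≤ 2 / y := by
          gcongr
          exact_mod_cast (Nat.lt_floor_add_one y).le

-- The guard `Y < k` also drops `k = 0`, where `(φ 0 : ℝ≥0∞)⁻¹ = ∞`.
noncomputable def totientTail (g : ℕ → ℝ≥0∞) (Y : ℝ≥0∞) : ℝ≥0∞ :=
  ∑' k : ℕ, if Y < k then g k / φ k else 0

theorem totientTail_le (g : ℕ → ℝ≥0∞) (Y : ℝ≥0∞) :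
    totientTail g Y ≤ ∑' d : ℕ, if d = 0 then 0 else
      (φ d : ℝ≥0∞)⁻¹ * (d : ℝ≥0∞)⁻¹ * ∑' m : ℕ, if Y / d < m then g (d * m) / m else 0 := by
  have h := tsum_div_totient_le (fun k => if Y < k then g k else 0) (by simp)
  simp only [ite_div, ENNReal.zero_div] at h
  refine h.trans (ENNReal.tsum_le_tsum fun d => ?_)
  rcases eq_or_ne d 0 with rfl | hd
  · simp
  have hd0 : (d : ℝ≥0∞) ≠ 0 := by exact_mod_cast hd
  rw [if_neg hd, mul_assoc]
  refine mul_le_mul_right (le_of_eq ?_) _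
  rw [← ENNReal.tsum_mul_left]
  refine tsum_congr fun m => ?_
  simp only [ENNReal.div_lt_iff (.inl hd0) (.inl (ENNReal.natCast_ne_top d)), mul_comm (m : ℝ≥0∞),
    Nat.cast_mul]
  split_ifs
  · rw [ENNReal.div_eq_inv_mul, ENNReal.div_eq_inv_mul, ← mul_assoc,
      ENNReal.mul_inv (.inl hd0) (.inl (ENNReal.natCast_ne_top d))]
  · simp

theorem totientTail_inv_le_tsum (Y : ℝ≥0∞) :
    totientTail (fun k => (k : ℝ≥0∞)⁻¹) Y ≤ ∑' d : ℕ, if d = 0 then 0 else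
      (φ d : ℝ≥0∞)⁻¹ * ((d : ℝ≥0∞) ^ 2)⁻¹ *
        ∑' m : ℕ, if Y / d < m then ((m : ℝ≥0∞) ^ 2)⁻¹ else 0 := by
  refine (totientTail_le _ Y).trans (le_of_eq (tsum_congr fun d => ?_))
  rcases eq_or_ne d 0 with rfl | hd
  · simp
  have hd0 : (d : ℝ≥0∞) ≠ 0 := by exact_mod_cast hd
  have hm : ∀ m : ℕ, (if Y / d < m then ((d * m : ℕ) : ℝ≥0∞)⁻¹ / m else 0)
      = (d : ℝ≥0∞)⁻¹ * if Y / d < m then ((m : ℝ≥0∞) ^ 2)⁻¹ else 0 := fun m => by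
    split_ifs
    · rw [Nat.cast_mul, ENNReal.mul_inv (.inl hd0) (.inl (ENNReal.natCast_ne_top _)),
        div_eq_mul_inv, pow_two,
        ENNReal.mul_inv (.inr (ENNReal.natCast_ne_top _)) (.inl (ENNReal.natCast_ne_top _)),
        mul_assoc]
    · rw [mul_zero]
  rw [if_neg hd, if_neg hd, tsum_congr hm, ENNReal.tsum_mul_left, ENNReal.inv_pow, pow_two]
  ring

theorem totientTail_inv_zero_le_four : totientTail (fun k => (k : ℝ≥0∞)⁻¹) 0 ≤ 4 :=
  calc totientTail (fun k => (k : ℝ≥0∞)⁻¹) 0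
      ≤ ∑' d : ℕ, (if 0 < d then ((d : ℝ≥0∞) ^ 2)⁻¹ else 0) * 2 := by
        refine (totientTail_inv_le_tsum 0).trans (ENNReal.tsum_le_tsum fun d => ?_)
        rcases eq_or_ne d 0 with rfl | hd
        · simp
        rw [if_neg hd, if_pos (Nat.pos_of_ne_zero hd), ENNReal.zero_div]
        simp only [Nat.cast_pos]
        gcongr
        · exact mul_le_of_le_one_left zero_le (Nat.inv_totient_le_one hd)
        · exact tsum_inv_sq_le
    _ ≤ 2 * 2 := by
        rw [ENNReal.tsum_mul_right]
        gcongr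
        exact tsum_inv_sq_le
    _ = 4 := by norm_num

theorem totientTail_inv_le_div_mul (Y : ℝ≥0∞) :
    totientTail (fun k => (k : ℝ≥0∞)⁻¹) Y ≤ 2 / Y * totientTail (fun k => (k : ℝ≥0∞)⁻¹) 0 := by
  conv_rhs => rw [totientTail, ← ENNReal.tsum_mul_left]
  refine (totientTail_inv_le_tsum Y).trans (ENNReal.tsum_le_tsum fun d => ?_)
  rcases eq_or_ne d 0 with rfl | hd
  · simp
  have hd0 : (d : ℝ≥0∞) ≠ 0 := by exact_mod_cast hd
  have hdt : (d : ℝ≥0∞) ≠ ∞ := ENNReal.natCast_ne_top d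
  rw [if_neg hd, if_pos (by exact_mod_cast Nat.pos_of_ne_zero hd)]
  calc (φ d : ℝ≥0∞)⁻¹ * ((d : ℝ≥0∞) ^ 2)⁻¹ * ∑' m : ℕ, (if Y / d < m then ((m : ℝ≥0∞) ^ 2)⁻¹ else 0)
      ≤ (φ d : ℝ≥0∞)⁻¹ * ((d : ℝ≥0∞) ^ 2)⁻¹ * (2 / Y * d) := by
        rw [ENNReal.div_mul _ (.inr hd0) (.inr hdt)]
        gcongr
        exact tsum_inv_sq_tail_le _
    _ = 2 / Y * ((d : ℝ≥0∞)⁻¹ / φ d) := by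
        rw [ENNReal.inv_pow, pow_two, div_eq_mul_inv (d : ℝ≥0∞)⁻¹]
        calc (φ d : ℝ≥0∞)⁻¹ * ((d : ℝ≥0∞)⁻¹ * (d : ℝ≥0∞)⁻¹) * (2 / Y * d)
            = (φ d : ℝ≥0∞)⁻¹ * (d : ℝ≥0∞)⁻¹ * (2 / Y) * ((d : ℝ≥0∞)⁻¹ * d) := by ring
          _ = _ := by rw [ENNReal.inv_mul_cancel hd0 hdt]; ring

theorem totientTail_inv_totient_le_tsum (Y : ℝ≥0∞) :
    totientTail (fun k => (φ k : ℝ≥0∞)⁻¹) Y ≤ ∑' d : ℕ, if d = 0 then 0 else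
      (φ d : ℝ≥0∞)⁻¹ * (φ d : ℝ≥0∞)⁻¹ * (d : ℝ≥0∞)⁻¹ *
        totientTail (fun k => (k : ℝ≥0∞)⁻¹) (Y / d) := by
  refine (totientTail_le _ Y).trans (ENNReal.tsum_le_tsum fun d => ?_)
  rcases eq_or_ne d 0 with rfl | hd
  · simp
  rw [if_neg hd, if_neg hd, totientTail, ← ENNReal.tsum_mul_left, ← ENNReal.tsum_mul_left]
  refine ENNReal.tsum_le_tsum fun m => ?_
  split_ifs
  · calc (φ d : ℝ≥0∞)⁻¹ * (d : ℝ≥0∞)⁻¹ * ((φ (d * m) : ℝ≥0∞)⁻¹ / m)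
        ≤ (φ d : ℝ≥0∞)⁻¹ * (d : ℝ≥0∞)⁻¹ * ((φ d : ℝ≥0∞)⁻¹ * (φ m : ℝ≥0∞)⁻¹ / m) := by
          gcongr
          exact Nat.inv_totient_mul_le d m
      _ = _ := by simp only [div_eq_mul_inv]; ring
  · simp

theorem totientTail_inv_totient_zero_le_sq :
    totientTail (fun k => (φ k : ℝ≥0∞)⁻¹) 0 ≤ totientTail (fun k => (k : ℝ≥0∞)⁻¹) 0 ^ 2 := by
  rw [pow_two]
  conv_rhs => rw [totientTail, ← ENNReal.tsum_mul_right]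
  refine (totientTail_inv_totient_le_tsum 0).trans (ENNReal.tsum_le_tsum fun d => ?_)
  rcases eq_or_ne d 0 with rfl | hd
  · simp
  rw [if_neg hd, if_pos (by exact_mod_cast Nat.pos_of_ne_zero hd), ENNReal.zero_div, div_eq_mul_inv]
  gcongr ?_ * _
  calc (φ d : ℝ≥0∞)⁻¹ * (φ d : ℝ≥0∞)⁻¹ * (d : ℝ≥0∞)⁻¹ ≤ 1 * (φ d : ℝ≥0∞)⁻¹ * (d : ℝ≥0∞)⁻¹ := by
        gcongr
        exact Nat.inv_totient_le_one hd
    _ = (d : ℝ≥0∞)⁻¹ * (φ d : ℝ≥0∞)⁻¹ := by ring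

theorem totientTail_inv_totient_le_div_mul (Y : ℝ≥0∞) :
    totientTail (fun k => (φ k : ℝ≥0∞)⁻¹) Y ≤
      2 / Y * totientTail (fun k => (k : ℝ≥0∞)⁻¹) 0 * totientTail (fun k => (φ k : ℝ≥0∞)⁻¹) 0 := by
  rw [totientTail.eq_1 (fun k => (φ k : ℝ≥0∞)⁻¹) 0, ← ENNReal.tsum_mul_left]
  refine (totientTail_inv_totient_le_tsum Y).trans (ENNReal.tsum_le_tsum fun d => ?_)
  rcases eq_or_ne d 0 with rfl | hd
  · simp
  have hd0 : (d : ℝ≥0∞) ≠ 0 := by exact_mod_cast hd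
  have hdt : (d : ℝ≥0∞) ≠ ∞ := ENNReal.natCast_ne_top d
  rw [if_neg hd, if_pos (by exact_mod_cast Nat.pos_of_ne_zero hd)]
  calc (φ d : ℝ≥0∞)⁻¹ * (φ d : ℝ≥0∞)⁻¹ * (d : ℝ≥0∞)⁻¹ * totientTail (fun k => (k : ℝ≥0∞)⁻¹) (Y / d)
      ≤ (φ d : ℝ≥0∞)⁻¹ * (φ d : ℝ≥0∞)⁻¹ * (d : ℝ≥0∞)⁻¹ *
          (2 / Y * d * totientTail (fun k => (k : ℝ≥0∞)⁻¹) 0) := by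
        rw [ENNReal.div_mul _ (.inr hd0) (.inr hdt)]
        gcongr
        exact totientTail_inv_le_div_mul _
    _ = (φ d : ℝ≥0∞)⁻¹ * (φ d : ℝ≥0∞)⁻¹ * ((d : ℝ≥0∞)⁻¹ * d) *
          (2 / Y * totientTail (fun k => (k : ℝ≥0∞)⁻¹) 0) := by ring
    _ = _ := by rw [ENNReal.inv_mul_cancel hd0 hdt, div_eq_mul_inv (φ d : ℝ≥0∞)⁻¹]; ring

theorem totientTail_inv_totient_le_div (Y : ℝ≥0∞) :
    totientTail (fun k => (φ k : ℝ≥0∞)⁻¹) Y ≤ 128 / Y :=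
  calc totientTail (fun k => (φ k : ℝ≥0∞)⁻¹) Y
      ≤ 2 / Y * totientTail (fun k => (k : ℝ≥0∞)⁻¹) 0 * totientTail (fun k => (φ k : ℝ≥0∞)⁻¹) 0 :=
        totientTail_inv_totient_le_div_mul Y
    _ ≤ 2 / Y * 4 * 4 ^ 2 := by
        gcongr
        · exact totientTail_inv_zero_le_four
        · exact totientTail_inv_totient_zero_le_sq.trans
            (by gcongr; exact totientTail_inv_zero_le_four)
    _ = 128 / Y := by rw [div_eq_mul_inv, div_eq_mul_inv]; ring

theorem tsum_one_div_totient_sq_tail_eq_toReal {Y : ℝ} (hY : 0 ≤ Y) :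
    ∑' k : ℕ, (if Y < (k : ℝ) then 1 / (φ k : ℝ) ^ 2 else 0)
      = (totientTail (fun k => (φ k : ℝ≥0∞)⁻¹) (ENNReal.ofReal Y)).toReal := by
  have hfin : ∀ k : ℕ, (if ENNReal.ofReal Y < k then (φ k : ℝ≥0∞)⁻¹ / φ k else 0) ≠ ∞ := by
    intro k
    split_ifs with hk
    · have hk0 : φ k ≠ 0 := by
        rw [Ne, Nat.totient_eq_zero]
        rintro rfl
        simp at hk
      have hk0' : (φ k : ℝ≥0∞) ≠ 0 := by exact_mod_cast hk0
      exact ENNReal.div_ne_top (ENNReal.inv_ne_top.2 hk0') hk0'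
    · exact ENNReal.zero_ne_top
  rw [totientTail, ENNReal.tsum_toReal_eq hfin]
  refine tsum_congr fun k => ?_
  simp only [ENNReal.ofReal_lt_iff_lt_toReal hY (ENNReal.natCast_ne_top k), ENNReal.toReal_natCast]
  split_ifs
  · simp [div_eq_mul_inv, pow_two]
  · rfl

/-- There is an absolute constant `C` such that for all real `Y ≥ 1`,
`∑_{k > Y} 1 / φ(k)² ≤ C / Y`. -/
theorem tsum_one_div_totient_sq_tail_le :
    ∃ C : ℝ, ∀ Y : ℝ, 1 ≤ Y →
      ∑' k : ℕ, (if Y < (k : ℝ) then 1 / (Nat.totient k : ℝ) ^ 2 else 0) ≤ C / Y := by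
  refine ⟨128, fun Y hY => ?_⟩
  have hY : 0 < Y := by linarith
  calc ∑' k : ℕ, (if Y < (k : ℝ) then 1 / (φ k : ℝ) ^ 2 else 0)
      = (totientTail (fun k => (φ k : ℝ≥0∞)⁻¹) (ENNReal.ofReal Y)).toReal :=
        tsum_one_div_totient_sq_tail_eq_toReal hY.le
    _ ≤ (128 / ENNReal.ofReal Y).toReal :=
        ENNReal.toReal_mono (ENNReal.div_ne_top (by norm_num) (by simpa using hY))
          (totientTail_inv_totient_le_div _)
    _ = 128 / Y := by rw [ENNReal.toReal_div, ENNReal.toReal_ofReal hY.le]; norm_num
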